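/- For integers q ≥ 1 and p ≥ 0, the function Λ(t) = −Σ_{r=1}^{q} 2^{r−1} ((q−1)!/(q−r)!) t^{2(q−r)} t^{p+r} K_{p+r}(t) is an antiderivative of t ↦ t^{2q+p−1} K_p(t) on (0, ∞), where K_ν is the modified Bessel function of the second kind. -/

import Mathlib

/-!
Substituting `u = t * s` in the defining integral gives
`t ^ ν * K_ν(t) = ½ ∫₀^∞ u ^ (ν - 1) * exp (-u / 2 - t² / (2u)) du`, where `t` only enters through
`t² / (2u)`. Differentiating under the integral sign in this form yields the rule
`(t ^ ν * K_ν(t))' = -t ^ ν * K_{ν-1}(t)` directly, without any recurrence for `K`. By this rule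
the derivative of the `r`-th summand of `Λ` is `B (r + 1) - B r` for an explicit `B`, so the sum
telescopes to `B 1 - B (q + 1) = t ^ (2q + p - 1) * K_p(t)`; `B (q + 1)` vanishes because
`(q - 1)! / (q - r)!` is the descending factorial `(q - 1).descFactorial (r - 1)`, which is zero
for `r = q + 1`.
-/

open MeasureTheory Real Set

/-- Modified Bessel function of the second kind. -/
noncomputable def besselK (ν x : ℝ) : ℝ :=
  (1 / 2) * ∫ t in Ioi (0 : ℝ), t ^ (ν - 1) * Real.exp (-(x / 2) * (t + 1 / t))

open Filter Topology
open scoped Nat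

lemma exp_neg_div_le_factorial_mul_pow (n : ℕ) {β s : ℝ} (hβ : 0 < β) (hs : 0 < s) :
    exp (-β / s) ≤ n ! / β ^ n * s ^ n := by
  have h := pow_div_factorial_le_exp (x := β / s) (div_pos hβ hs).le n
  rw [neg_div, exp_neg, inv_le_iff_one_le_mul₀ (exp_pos _)]
  calc (1 : ℝ) = (n ! / β ^ n * s ^ n) * ((β / s) ^ n / n !) := by
        rw [div_pow]; field_simp
    _ ≤ _ := by gcongr

lemma integrableOn_rpow_mul_exp_neg_mul_sub_div (a : ℝ) {α β : ℝ} (hα : 0 < α) (hβ : 0 < β) :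
    IntegrableOn (fun s : ℝ => s ^ a * exp (-α * s - β / s)) (Ioi 0) := by
  set N := ⌈-a⌉₊
  have hN : -1 < a + N := by linarith [Nat.le_ceil (-a)]
  have hdom : IntegrableOn (fun s : ℝ => N ! / β ^ N * (s ^ (a + N) * exp (-α * s ^ (1 : ℝ))))
      (Ioi 0) := (integrableOn_rpow_mul_exp_neg_mul_rpow hN one_pos hα).const_mul _
  refine hdom.mono' ?_ ((ae_restrict_iff' measurableSet_Ioi).2 (.of_forall fun s hs => ?_))
  · refine ContinuousOn.aestronglyMeasurable ?_ measurableSet_Ioi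
    fun_prop (disch := intro x hx; exact hx.ne')
  · have hs : 0 < s := hs
    rw [norm_of_nonneg (by positivity), rpow_one, rpow_add hs, rpow_natCast, sub_eq_add_neg,
      exp_add, ← neg_div]
    calc s ^ a * (exp (-α * s) * exp (-β / s))
        ≤ s ^ a * (exp (-α * s) * (N ! / β ^ N * s ^ N)) := by
          gcongr; exact exp_neg_div_le_factorial_mul_pow N hβ hs
      _ = _ := by ring

lemma rpow_mul_besselK_eq_integral (ν : ℝ) {t : ℝ} (ht : 0 < t) :
    t ^ ν * besselK ν t =
      (1 / 2) * ∫ u in Ioi 0, u ^ (ν - 1) * exp (-(1 / 2) * u - t ^ 2 / 2 / u) := by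
  have hsub := integral_comp_mul_left_Ioi
    (fun u => u ^ (ν - 1) * exp (-(1 / 2) * u - t ^ 2 / 2 / u)) 0 ht
  rw [mul_zero, smul_eq_mul, eq_inv_mul_iff_mul_eq₀ ht.ne'] at hsub
  have hscale : ∀ s ∈ Ioi (0 : ℝ),
      (t * s) ^ (ν - 1) * exp (-(1 / 2) * (t * s) - t ^ 2 / 2 / (t * s)) =
        t ^ (ν - 1) * (s ^ (ν - 1) * exp (-(t / 2) * (s + 1 / s))) := fun s hs => by
    have hs : 0 < s := hs
    rw [mul_rpow ht.le hs.le, mul_assoc]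
    congr 3
    field_simp
    ring
  rw [← hsub, setIntegral_congr_fun measurableSet_Ioi hscale, integral_const_mul, besselK,
    rpow_sub_one ht.ne']
  field_simp

lemma hasDerivAt_integral_rpow_mul_exp_neg_sub_sq_div (a : ℝ) {t : ℝ} (ht : t ≠ 0) :
    HasDerivAt (fun x => ∫ u in Ioi 0, u ^ a * exp (-(1 / 2) * u - x ^ 2 / 2 / u))
      (-t * ∫ u in Ioi 0, u ^ (a - 1) * exp (-(1 / 2) * u - t ^ 2 / 2 / u)) t := by
  have hint : ∀ (b : ℝ) {x : ℝ}, x ≠ 0 →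
      IntegrableOn (fun u : ℝ => u ^ b * exp (-(1 / 2) * u - x ^ 2 / 2 / u)) (Ioi 0) :=
    fun b x hx => integrableOn_rpow_mul_exp_neg_mul_sub_div b one_half_pos (by positivity)
  have hball : ∀ x ∈ Metric.ball t (|t| / 2), |t| / 2 < |x| ∧ |x| < 2 * |t| := fun x hx => by
    rw [Metric.mem_ball, dist_eq_norm, norm_eq_abs] at hx
    constructor <;>
      linarith [abs_sub_abs_le_abs_sub t x, abs_sub_abs_le_abs_sub x t, abs_sub_comm x t]
  rw [← integral_const_mul]
  refine (hasDerivAt_integral_of_dominated_loc_of_deriv_le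
    (F' := fun x u => -x * (u ^ (a - 1) * exp (-(1 / 2) * u - x ^ 2 / 2 / u)))
    (bound := fun u => 2 * |t| * (u ^ (a - 1) * exp (-(1 / 2) * u - t ^ 2 / 8 / u)))
    (Metric.ball_mem_nhds t (by positivity : 0 < |t| / 2))
    ((eventually_ne_nhds ht).mono fun x hx => (hint a hx).aestronglyMeasurable)
    (hint a ht) ((hint (a - 1) ht).const_mul _).aestronglyMeasurable ?_
    ((integrableOn_rpow_mul_exp_neg_mul_sub_div (a - 1) one_half_pos
      (by positivity)).const_mul _) ?_).2
  · refine (ae_restrict_iff' measurableSet_Ioi).2 (.of_forall fun u hu x hx => ?_)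
    have hu : 0 < u := hu
    obtain ⟨hx₁, hx₂⟩ := hball x hx
    have hsq : t ^ 2 / 8 ≤ x ^ 2 / 2 := by
      rw [← sq_abs t, ← sq_abs x]; nlinarith [abs_nonneg t]
    rw [norm_mul, norm_neg, norm_eq_abs, norm_of_nonneg (by positivity)]
    gcongr
  · refine (ae_restrict_iff' measurableSet_Ioi).2 (.of_forall fun u hu x _ => ?_)
    have hu : 0 < u := hu
    refine ((((((hasDerivAt_pow 2 x).div_const 2).div_const u).const_sub
      (-(1 / 2) * u)).exp).const_mul (u ^ a)).congr_deriv ?_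
    rw [rpow_sub_one hu.ne']
    field_simp
    ring

theorem hasDerivAt_rpow_mul_besselK (ν : ℝ) {t : ℝ} (ht : 0 < t) :
    HasDerivAt (fun x => x ^ ν * besselK ν x) (-(t ^ ν * besselK (ν - 1) t)) t := by
  have h := (hasDerivAt_integral_rpow_mul_exp_neg_sub_sq_div (ν - 1) ht.ne').const_mul
    (1 / 2 : ℝ)
  have heq : (fun x => x ^ ν * besselK ν x) =ᶠ[𝓝 t] fun x =>
      (1 / 2) * ∫ u in Ioi 0, u ^ (ν - 1) * exp (-(1 / 2) * u - x ^ 2 / 2 / u) :=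
    (eventually_gt_nhds ht).mono fun x hx => rpow_mul_besselK_eq_integral ν hx
  refine (h.congr_of_eventuallyEq heq).congr_deriv ?_
  have hsplit : t ^ ν = t * t ^ (ν - 1) := by rw [rpow_sub_one ht.ne']; field_simp
  rw [hsplit, mul_assoc, rpow_mul_besselK_eq_integral (ν - 1) ht]
  ring

theorem hasDerivAt_neg_sum_besselK (q : ℕ) (hq : 1 ≤ q) (ν : ℝ) {t : ℝ} (ht : 0 < t) :
    HasDerivAt (fun x : ℝ => -∑ r ∈ Finset.Icc 1 q,
        2 ^ (r - 1) * ((q - 1).descFactorial (r - 1) : ℝ) * (x ^ 2) ^ (q - r) *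
          (x ^ (ν + r) * besselK (ν + r) x))
      ((t ^ 2) ^ (q - 1) * (t ^ (ν + 1) * besselK ν t)) t := by
  set c : ℕ → ℝ := fun r => 2 ^ (r - 1) * ((q - 1).descFactorial (r - 1) : ℝ) with hc_def
  set B : ℕ → ℝ := fun r => c r * (t ^ 2) ^ (q - r) * (t ^ (ν + r) * besselK (ν + r - 1) t)
    with hB_def
  have hc : ∀ r, 1 ≤ r → c (r + 1) = 2 * (q - r : ℕ) * c r := fun r hr => by
    obtain ⟨k, rfl⟩ := Nat.exists_eq_add_of_le' hr
    simp only [hc_def, Nat.add_sub_cancel, Nat.descFactorial_succ, pow_succ]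
    rw [show q - 1 - k = q - (k + 1) by omega]
    push_cast
    ring
  have hterm : ∀ r ∈ Finset.Icc 1 q, HasDerivAt
      (fun x : ℝ => c r * (x ^ 2) ^ (q - r) * (x ^ (ν + r) * besselK (ν + r) x))
      (B (r + 1) - B r) t := fun r hr => by
    have hr : 1 ≤ r := (Finset.mem_Icc.1 hr).1
    refine ((((hasDerivAt_pow 2 t).fun_pow (q - r)).const_mul (c r)).mul
      (hasDerivAt_rpow_mul_besselK (ν + r) ht)).congr_deriv ?_
    simp only [hB_def, hc r hr, Nat.sub_add_eq, Nat.cast_add_one, rpow_add_one ht.ne',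
      ← add_assoc, add_sub_cancel_right]
    ring
  have hlast : B (q + 1) = 0 := by
    simp [hB_def, hc_def, Nat.descFactorial_eq_zero_iff_lt.2 (Nat.sub_lt hq one_pos)]
  have hfirst : B 1 = (t ^ 2) ^ (q - 1) * (t ^ (ν + 1) * besselK ν t) := by
    simp [hB_def, hc_def]
  have h := (HasDerivAt.fun_sum hterm).neg
  rwa [Finset.sum_Icc_sub hq, hlast, hfirst, zero_sub, neg_neg] at h

/-- `Λ(t) = -∑_{r=1}^q 2^(r-1) ((q-1)!/(q-r)!) t^(2(q-r)) t^(p+r) K_{p+r}(t)` is an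
antiderivative of `t ↦ t^(2q+p-1) K_p(t)` on `(0,∞)`. -/
theorem antiderivative_bessel (q p : ℕ) (hq : 1 ≤ q) (t : ℝ) (ht : 0 < t) :
    HasDerivAt (fun t : ℝ =>
        -∑ r ∈ Finset.Icc 1 q,
          (2 : ℝ) ^ (r - 1) * ((Nat.factorial (q - 1)) / (Nat.factorial (q - r))) *
            t ^ (2 * (q - r)) * t ^ (p + r) * besselK (p + r) t)
      (t ^ (2 * q + p - 1) * besselK p t) t := by
  have hfac : ∀ r ∈ Finset.Icc 1 q,
      ((q - 1)! / (q - r)! : ℝ) = (q - 1).descFactorial (r - 1) := fun r hr => by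
    have hr := Finset.mem_Icc.1 hr
    rw [div_eq_iff (by positivity), ← Nat.cast_mul, mul_comm,
      ← Nat.factorial_mul_descFactorial (by omega : r - 1 ≤ q - 1),
      show q - 1 - (r - 1) = q - r by omega]
  have hpow : t ^ (2 * q + p - 1) = (t ^ 2) ^ (q - 1) * t ^ ((p : ℝ) + 1) := by
    rw [← pow_mul, show ((p : ℝ) + 1) = (p + 1 : ℕ) by push_cast; rfl, rpow_natCast, ← pow_add,
      show 2 * q + p - 1 = 2 * (q - 1) + (p + 1) by omega]
  rw [hpow, mul_assoc]
  refine (hasDerivAt_neg_sum_besselK q hq p ht).congr_of_eventuallyEq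
    (.of_forall fun x => congrArg Neg.neg (Finset.sum_congr rfl fun r hr => ?_))
  rw [hfac r hr, ← pow_mul, show ((p : ℝ) + r) = (p + r : ℕ) by push_cast; rfl, rpow_natCast]
  push_cast
  ring
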